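/- Let n ≥ 2 be a power of 2 and consider the single-player instance with U = [n], the additive valuation with v({e}) = 1 for every e ∈ [n], budget B = n, and admissible cost class D = {c ∈ ℝ≥0^n : c_e ≤ B for all e} (the no-overbidding class). Every randomized mechanism M on this instance that is truthful in expectation, individually rational with probability 1, and budget-feasible in expectation admits a cost vector c ∈ D with E_{(S,ρ)∼M(c)}[v(S)] ≤ (2/(1 + log₂ n)) · OPTalg(v,B,c). -/
import Mathlib

open Finset

/-- The algorithmic optimum `OPTalg(v,B,c)`. -/
noncomputable def OPTalg {n : ℕ} (v c : Fin n → ℝ) (B : ℝ) : ℝ :=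
  sSup {x : ℝ | ∃ S : Finset (Fin n), (∑ e ∈ S, c e) ≤ B ∧ x = ∑ e ∈ S, v e}

/-- Expectation of `g` under a finitely-supported distribution `μ` on outcomes
`(S, ρ)` (procured set, payment). -/
noncomputable def fexp {n : ℕ} (μ : (Finset (Fin n) × ℝ) →₀ ℝ)
    (g : Finset (Fin n) × ℝ → ℝ) : ℝ :=
  μ.sum fun x w => w * g x

lemma fexp_sub {n : ℕ} (μ : (Finset (Fin n) × ℝ) →₀ ℝ) (f g : Finset (Fin n) × ℝ → ℝ) :
    fexp μ (fun x => f x - g x) = fexp μ f - fexp μ g := by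
  simp [fexp, Finsupp.sum, mul_sub, Finset.sum_sub_distrib]

lemma fexp_mono {n : ℕ} (μ : (Finset (Fin n) × ℝ) →₀ ℝ) (h0 : ∀ x, 0 ≤ μ x)
    {f g : Finset (Fin n) × ℝ → ℝ} (h : ∀ x ∈ μ.support, f x ≤ g x) :
    fexp μ f ≤ fexp μ g :=
  Finset.sum_le_sum fun x hx => mul_le_mul_of_nonneg_left (h x hx) (h0 x)

lemma fexp_mul_const {n : ℕ} (μ : (Finset (Fin n) × ℝ) →₀ ℝ)
    (f : Finset (Fin n) × ℝ → ℝ) (a : ℝ) :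
    fexp μ (fun x => f x * a) = fexp μ f * a := by
  simp only [fexp, Finsupp.sum, Finset.sum_mul]
  exact Finset.sum_congr rfl fun x _ => by ring

lemma fexp_nonneg {n : ℕ} (μ : (Finset (Fin n) × ℝ) →₀ ℝ) (h0 : ∀ x, 0 ≤ μ x)
    {f : Finset (Fin n) × ℝ → ℝ} (hf : ∀ x ∈ μ.support, 0 ≤ f x) :
    0 ≤ fexp μ f :=
  Finset.sum_nonneg fun x hx => mul_nonneg (h0 x) (hf x hx)

/-- Let `n ≥ 2` be a power of 2 and consider the single-player instance
with `U = [n]`, the additive valuation `v e = 1`, budget `B = n`, and the no-overbidding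
admissible class `D = {c : 0 ≤ c e ≤ B}`. Every randomized mechanism that is truthful in
expectation, individually rational with probability 1, and budget-feasible in expectation
admits a cost vector `c ∈ D` with expected procured value at most
`(2 / (1 + log₂ n)) · OPTalg(v,B,c)`. -/
theorem stmt3 (m n : ℕ) (hm : 1 ≤ m) (hn : n = 2 ^ m)
    (v : Fin n → ℝ) (hv : ∀ e, v e = 1) (B : ℝ) (hB : B = n)
    (M : (Fin n → ℝ) → ((Finset (Fin n) × ℝ) →₀ ℝ))
    -- each `M c` is a (finitely supported) probability distribution
    (hprob : ∀ c : Fin n → ℝ, (∀ e, 0 ≤ c e ∧ c e ≤ B) →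
      (∀ x, 0 ≤ M c x) ∧ (M c).sum (fun _ w => w) = 1)
    -- individual rationality with probability 1 (payments are nonnegative)
    (hir : ∀ c : Fin n → ℝ, (∀ e, 0 ≤ c e ∧ c e ≤ B) → ∀ x ∈ (M c).support,
      0 ≤ x.2 ∧ (∑ e ∈ x.1, c e) ≤ x.2)
    -- truthfulness in expectation
    (htruth : ∀ cbar c : Fin n → ℝ,
      (∀ e, 0 ≤ cbar e ∧ cbar e ≤ B) → (∀ e, 0 ≤ c e ∧ c e ≤ B) →
      fexp (M c) (fun x => x.2 - ∑ e ∈ x.1, cbar e) ≤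
        fexp (M cbar) (fun x => x.2 - ∑ e ∈ x.1, cbar e))
    -- budget feasibility in expectation
    (hbf : ∀ c : Fin n → ℝ, (∀ e, 0 ≤ c e ∧ c e ≤ B) →
      fexp (M c) (fun x => x.2) ≤ B) :
    ∃ c : Fin n → ℝ, (∀ e, 0 ≤ c e ∧ c e ≤ B) ∧
      fexp (M c) (fun x => ∑ e ∈ x.1, v e) ≤
        2 / (1 + Real.logb 2 n) * OPTalg v c B := by
  by_contra hcon
  push_neg at hcon
  -- `log₂ n = m`
  have hnR : (n : ℝ) = 2 ^ m := by rw [hn]; push_cast; ring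
  have hlogb : Real.logb 2 (n : ℝ) = m := by
    rw [hnR, ← Real.rpow_natCast 2 m, Real.logb_rpow (by norm_num) (by norm_num)]
  have hm1 : (0:ℝ) < 1 + (m:ℝ) := by positivity
  set r : ℝ := 2 / (1 + (m:ℝ)) with hr
  have hrpos : 0 < r := by positivity
  -- the uniform cost vectors
  set cj : ℕ → Fin n → ℝ := fun j _ => 2 ^ j with hcj
  have hD : ∀ j ≤ m, ∀ e, 0 ≤ cj j e ∧ cj j e ≤ B := by
    intro j hj e
    refine ⟨by positivity, ?_⟩
    rw [hB, hnR]
    exact pow_le_pow_right₀ (by norm_num) hj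
  -- expected number of items and expected payment
  set E : ℕ → ℝ := fun j => fexp (M (cj j)) (fun x => (x.1.card : ℝ)) with hE
  set P : ℕ → ℝ := fun j => fexp (M (cj j)) (fun x => x.2) with hP
  have hcost : ∀ j, (fun x : Finset (Fin n) × ℝ => ∑ e ∈ x.1, cj j e)
      = fun x => (x.1.card : ℝ) * 2 ^ j := by
    intro j; funext x; simp [hcj, mul_comm]
  -- nonnegativity of weights
  have hw : ∀ j ≤ m, ∀ x, 0 ≤ M (cj j) x := fun j hj => (hprob _ (hD j hj)).1
  -- IR in expectation : 2^j * E j ≤ P j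
  have hIR : ∀ j ≤ m, E j * 2 ^ j ≤ P j := by
    intro j hj
    have := fexp_mono (M (cj j)) (hw j hj)
      (f := fun x => (x.1.card : ℝ) * 2 ^ j) (g := fun x => x.2)
      (fun x hx => by
        have h2 := (hir _ (hD j hj) x hx).2
        simp only [hcj, Finset.sum_const, nsmul_eq_mul] at h2
        exact h2)
    rwa [fexp_mul_const] at this
  -- truthfulness step : utility comparison
  have hstep : ∀ j, j + 1 ≤ m →
      P (j+1) - E (j+1) * 2 ^ j ≤ P j - E j * 2 ^ j := by
    intro j hj
    have ht := htruth (cj j) (cj (j+1)) (hD j (le_trans (Nat.le_succ j) hj)) (hD (j+1) hj)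
    rw [show (fun x : Finset (Fin n) × ℝ => x.2 - ∑ e ∈ x.1, cj j e)
        = fun x => x.2 - (x.1.card : ℝ) * 2 ^ j from by
      funext x; simp [hcj, mul_comm]] at ht
    rw [fexp_sub, fexp_sub, fexp_mul_const, fexp_mul_const] at ht
    exact ht
  -- telescoping
  have hchain : ∀ k, k ≤ m →
      (P k - E k * 2 ^ k) + ∑ j ∈ Finset.range k, 2 ^ j * E (j+1) ≤ P 0 - E 0 := by
    intro k
    induction k with
    | zero => intro _; simp
    | succ k ih =>
      intro hk
      have ihk := ih (le_trans (Nat.le_succ k) hk)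
      have h1 := hstep k hk
      have h2 := hIR (k+1) hk
      rw [Finset.sum_range_succ]
      have : P (k+1) - E (k+1) * 2 ^ (k+1) + 2 ^ k * E (k+1)
          = P (k+1) - E (k+1) * 2 ^ k := by ring
      nlinarith [this]
  -- the budget bound
  have hum : 0 ≤ P m - E m * 2 ^ m := by linarith [hIR m le_rfl]
  have hPB : P 0 ≤ (2:ℝ) ^ m := by
    have := hbf (cj 0) (hD 0 (by omega))
    rw [hB, hnR] at this
    exact this
  have htotal : E 0 + ∑ j ∈ Finset.range m, 2 ^ j * E (j+1) ≤ (2:ℝ) ^ m := by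
    have := hchain m le_rfl
    nlinarith
  -- lower bound on OPTalg
  have hOPT : ∀ j ≤ m, (2:ℝ) ^ (m - j) ≤ OPTalg v (cj j) B := by
    intro j hj
    have hcard : 2 ^ (m - j) ≤ (Finset.univ : Finset (Fin n)).card := by
      rw [Finset.card_univ, Fintype.card_fin, hn]
      exact Nat.pow_le_pow_right (by norm_num) (Nat.sub_le m j)
    obtain ⟨S, -, hS⟩ := Finset.exists_subset_card_eq hcard
    have hmem : (2:ℝ) ^ (m - j) ∈
        {x : ℝ | ∃ S : Finset (Fin n), (∑ e ∈ S, cj j e) ≤ B ∧ x = ∑ e ∈ S, v e} := by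
      refine ⟨S, ?_, ?_⟩
      · have : (∑ e ∈ S, cj j e) = (S.card : ℝ) * 2 ^ j := by simp [hcj, mul_comm]
        rw [this, hS, hB, hnR]
        push_cast
        rw [← pow_add, Nat.sub_add_cancel hj]
      · simp only [hv, Finset.sum_const, nsmul_eq_mul, mul_one]
        rw [hS]; push_cast; ring
    have hbdd : BddAbove
        {x : ℝ | ∃ S : Finset (Fin n), (∑ e ∈ S, cj j e) ≤ B ∧ x = ∑ e ∈ S, v e} := by
      refine ⟨(n : ℝ), fun x hx => ?_⟩
      obtain ⟨S, -, rfl⟩ := hx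
      simp only [hv, Finset.sum_const, nsmul_eq_mul, mul_one]
      exact_mod_cast Finset.card_le_card (Finset.subset_univ S) |>.trans
        (by rw [Finset.card_univ, Fintype.card_fin])
    exact le_csSup hbdd hmem
  -- the strict lower bound on E j
  have hEj : ∀ j ≤ m, r * 2 ^ (m - j) < E j := by
    intro j hj
    have h1 := hcon (cj j) (hD j hj)
    rw [hlogb] at h1
    have h2 : r * 2 ^ (m - j) ≤ r * OPTalg v (cj j) B :=
      mul_le_mul_of_nonneg_left (hOPT j hj) (le_of_lt hrpos)
    have h3 : fexp (M (cj j)) (fun x => ∑ e ∈ x.1, v e) = E j := by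
      simp [hE, fexp, hv]
    rw [h3] at h1
    exact lt_of_le_of_lt h2 h1
  -- combine
  have hE0 : r * 2 ^ m < E 0 := by simpa using hEj 0 (by omega)
  have hsum : (m : ℝ) * (r * 2 ^ (m - 1)) ≤ ∑ j ∈ Finset.range m, 2 ^ j * E (j+1) := by
    have : ∀ j ∈ Finset.range m, r * 2 ^ (m - 1) ≤ 2 ^ j * E (j+1) := by
      intro j hjr
      have hjm : j + 1 ≤ m := Finset.mem_range.mp hjr
      have := le_of_lt (hEj (j+1) hjm)
      have h2 : (2:ℝ) ^ j * (r * 2 ^ (m - (j+1))) ≤ 2 ^ j * E (j+1) :=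
        mul_le_mul_of_nonneg_left this (by positivity)
      have h3 : (2:ℝ) ^ j * (r * 2 ^ (m - (j+1))) = r * 2 ^ (m - 1) := by
        rw [show (2:ℝ) ^ j * (r * 2 ^ (m - (j+1))) = r * (2 ^ j * 2 ^ (m - (j+1))) by ring,
          ← pow_add, show j + (m - (j+1)) = m - 1 by omega]
      rwa [h3] at h2
    calc (m : ℝ) * (r * 2 ^ (m - 1))
        = ∑ _j ∈ Finset.range m, r * 2 ^ (m - 1) := by
          rw [Finset.sum_const, Finset.card_range, nsmul_eq_mul]
      _ ≤ _ := Finset.sum_le_sum this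
  -- final numeric contradiction
  have h2m : (2:ℝ) ^ m = 2 * 2 ^ (m - 1) := by
    rw [← pow_succ']
    congr 1
    omega
  have hpos : (0:ℝ) < 2 ^ (m - 1) := by positivity
  have : r * 2 ^ m + (m : ℝ) * (r * 2 ^ (m - 1)) > (2:ℝ) ^ m := by
    rw [h2m, hr]
    rw [div_mul_eq_mul_div, div_mul_eq_mul_div]
    rw [gt_iff_lt, ← sub_pos]
    have : 2 * (2 * 2 ^ (m-1)) / (1 + (m:ℝ)) + (m:ℝ) * (2 * 2 ^ (m-1) / (1 + (m:ℝ)))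
        - 2 * 2 ^ (m-1) = 2 * 2 ^ (m-1) / (1 + (m:ℝ)) := by
      field_simp
      ring
    rw [this]
    positivity
  linarith [htotal, hE0, hsum]
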